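/- Let Lx, Ly, m and N be positive integers with m ≤ min(Lx, Ly) − 1 and 2 ≤ N ≤ Lx·Ly. If N sites of the Lx × Ly lattice are occupied uniformly at random (averaging over all N-element subsets of the Lx·Ly sites), then the expected number of unordered pairs of occupied sites at uniform (Chebyshev) distance exactly m equals (N/(Lx·Ly))·((N−1)/(Lx·Ly − 1))·(4mLxLy − 3(Lx + Ly)m² + 2m³). -/

import Mathlib

/-- The site set of the `Lx × Ly` square lattice. -/
def latticeSites (Lx Ly : ℕ) : Finset (ℕ × ℕ) :=
  Finset.range Lx ×ˢ Finset.range Ly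

/-- The (non-periodic) uniform (Chebyshev) distance between two lattice sites. -/
def uniformDist (a b : ℕ × ℕ) : ℕ :=
  max (Nat.dist a.1 b.1) (Nat.dist a.2 b.2)

/-- The number of unordered pairs of occupied sites (of a configuration `M`) at uniform
distance exactly `m`. -/
def pairCount (m : ℕ) (M : Finset (ℕ × ℕ)) : ℕ :=
  ((M.powersetCard 2).filter
    (fun p => ∃ a ∈ p, ∃ b ∈ p, a ≠ b ∧ uniformDist a b = m)).card

/-!
Each 2-subset of the `n = Lx * Ly` sites lies in `C(n-2, N-2)` of the `C(n, N)` configurations,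
so the expectation is the number of pairs at distance `m` times `C(N, 2) / C(n, 2)`.
The ordered pairs at uniform distance `≤ k` are products of one-dimensional pairs at distance
`≤ k`, of which there are `(2k+1)L - k(k+1)`; the pairs at distance exactly `m` are the
difference between `k = m` and `k = m - 1`, and halving counts them unordered.
-/

open Finset

section Subsets

variable {α : Type*} [DecidableEq α]

theorem sum_card_filter_powersetCard_eq (s : Finset α) (q : Finset α → Prop) [DecidablePred q]
    {k N : ℕ} (hkN : k ≤ N) :
    ∑ M ∈ s.powersetCard N, #((M.powersetCard k).filter q)
      = #((s.powersetCard k).filter q) * (#s - k).choose (N - k) := by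
  set P := (s.powersetCard k).filter q
  have hfilter : ∀ M ∈ s.powersetCard N,
      (M.powersetCard k).filter q = P.bipartiteBelow (· ⊆ ·) M := by
    intro M hM
    have hMs := (mem_powersetCard.mp hM).1
    ext p
    simp only [mem_filter, mem_powersetCard, mem_bipartiteBelow, P]
    constructor
    · rintro ⟨⟨hpM, hpk⟩, hq⟩
      exact ⟨⟨⟨hpM.trans hMs, hpk⟩, hq⟩, hpM⟩
    · rintro ⟨⟨⟨-, hpk⟩, hq⟩, hpM⟩
      exact ⟨⟨hpM, hpk⟩, hq⟩
  rw [sum_congr rfl (fun M hM => congrArg card (hfilter M hM)),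
    ← sum_card_bipartiteAbove_eq_sum_card_bipartiteBelow, ← smul_eq_mul, ← sum_const]
  refine sum_congr rfl fun p hp => ?_
  obtain ⟨hps, hpk⟩ := mem_powersetCard.mp (mem_filter.mp hp).1
  rw [bipartiteAbove, card_filter_powersetCard_subset p s N hps (hpk ▸ hkN), hpk]

theorem sum_card_filter_powersetCard_div_choose (s : Finset α) (q : Finset α → Prop)
    [DecidablePred q] {k N : ℕ} (hkN : k ≤ N) (hN : N ≤ #s) :
    (∑ M ∈ s.powersetCard N, (#((M.powersetCard k).filter q) : ℚ)) / (#s).choose N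
      = #((s.powersetCard k).filter q) * N.choose k / (#s).choose k := by
  have hchoose := Nat.choose_mul (n := #s) hkN
  rw [div_eq_div_iff (by exact_mod_cast (Nat.choose_pos hN).ne')
    (by exact_mod_cast (Nat.choose_pos (hkN.trans hN)).ne'), ← Nat.cast_sum,
    sum_card_filter_powersetCard_eq s q hkN]
  exact_mod_cast by
    rw [mul_assoc, mul_assoc, mul_comm (N.choose k), hchoose, mul_comm ((#s).choose k)]

theorem card_filter_product_eq_two_mul_card_pairs (s : Finset α) (r : α → α → Prop)
    [DecidableRel r] (hsymm : ∀ a b, r a b → r b a) (hirr : ∀ a, ¬ r a a) :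
    #((s ×ˢ s).filter (fun q => r q.1 q.2))
      = 2 * #((s.powersetCard 2).filter
          (fun p => ∃ a ∈ p, ∃ b ∈ p, a ≠ b ∧ r a b)) := by
  set P := (s.powersetCard 2).filter (fun p => ∃ a ∈ p, ∃ b ∈ p, a ≠ b ∧ r a b)
  have hmaps :
      ∀ q ∈ (s ×ˢ s).filter (fun q => r q.1 q.2), ({q.1, q.2} : Finset α) ∈ P := by
    rintro ⟨a, b⟩ hq
    obtain ⟨⟨ha, hb⟩, hab⟩ := by simpa only [mem_filter, mem_product] using hq
    have hne : a ≠ b := fun h => hirr a (h ▸ hab)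
    simp only [P, mem_filter, mem_powersetCard]
    exact ⟨⟨by simp [insert_subset_iff, ha, hb], card_pair hne⟩,
      a, by simp, b, by simp, hne, hab⟩
  rw [card_eq_sum_card_fiberwise hmaps, mul_comm, ← smul_eq_mul, ← sum_const]
  refine sum_congr rfl fun p hp => ?_
  obtain ⟨⟨hps, hp2⟩, a, ha, b, hb, hne, hab⟩ := by
    simpa only [P, mem_filter, mem_powersetCard] using hp
  obtain rfl : p = {a, b} := (eq_of_subset_of_card_le (by simp [insert_subset_iff, ha, hb])
    (by simp [hp2, card_pair hne])).symm
  have hfiber : ((s ×ˢ s).filter (fun q => r q.1 q.2)).filter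
      (fun q => ({q.1, q.2} : Finset α) = {a, b}) = {(a, b), (b, a)} := by
    ext ⟨x, y⟩
    rw [mem_filter, ← coe_inj, coe_pair, coe_pair, Set.pair_eq_pair_iff]
    simp only [mem_filter, mem_product, mem_insert, mem_singleton, Prod.mk.injEq]
    refine ⟨And.right, fun hxy => ⟨?_, hxy⟩⟩
    rcases hxy with ⟨rfl, rfl⟩ | ⟨rfl, rfl⟩
    · exact ⟨⟨hps (by simp), hps (by simp)⟩, hab⟩
    · exact ⟨⟨hps (by simp), hps (by simp)⟩, hsymm _ _ hab⟩
  rw [hfiber, card_pair (by simp [hne])]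

end Subsets

theorem card_filter_le_add_one {ι : Type*} (s : Finset ι) (f : ι → ℕ) (k : ℕ) :
    #(s.filter (fun i => f i ≤ k + 1))
      = #(s.filter (fun i => f i ≤ k)) + #(s.filter (fun i => f i = k + 1)) := by
  classical
  rw [← card_union_of_disjoint (disjoint_filter.mpr fun _ _ h => by omega), ← filter_or]
  exact congrArg card (filter_congr fun _ _ => by omega)

theorem card_filter_dist_eq (L d : ℕ) (hd : 0 < d) :
    #((range L ×ˢ range L).filter (fun p => Nat.dist p.1 p.2 = d)) = 2 * (L - d) := by
  have hsplit : (range L ×ˢ range L).filter (fun p => Nat.dist p.1 p.2 = d)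
      = (range (L - d)).image (fun x => (x, x + d))
        ∪ (range (L - d)).image (fun x => (x + d, x)) := by
    ext ⟨x, y⟩
    simp only [mem_filter, mem_product, mem_range, mem_union, mem_image, Prod.mk.injEq]
    unfold Nat.dist
    constructor
    · rintro ⟨⟨hx, hy⟩, hxy⟩
      rcases le_total x y with hle | hle
      · exact Or.inl ⟨x, by omega, rfl, by omega⟩
      · exact Or.inr ⟨y, by omega, by omega, rfl⟩
    · rintro (⟨a, ha, rfl, rfl⟩ | ⟨a, ha, rfl, rfl⟩) <;> omega
  have hdisj : Disjoint ((range (L - d)).image (fun x => (x, x + d)))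
      ((range (L - d)).image (fun x => (x + d, x))) := by
    simp only [disjoint_left, mem_image]
    rintro _ ⟨a, -, rfl⟩ ⟨b, -, hba⟩
    simp only [Prod.mk.injEq] at hba
    omega
  rw [hsplit, card_union_of_disjoint hdisj,
    card_image_of_injective _ (fun a b h => by simpa using h),
    card_image_of_injective _ (fun a b h => by simpa using h), card_range, two_mul]

theorem card_filter_dist_le_add (L k : ℕ) (hk : k ≤ L) :
    #((range L ×ˢ range L).filter (fun p => Nat.dist p.1 p.2 ≤ k)) + k * (k + 1)
      = (2 * k + 1) * L := by
  induction k with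
  | zero =>
    have hdiag :
        (range L ×ˢ range L).filter (fun p => Nat.dist p.1 p.2 ≤ 0) = (range L).diag := by
      ext ⟨x, y⟩
      simp only [mem_filter, mem_product, mem_range, mem_diag]
      unfold Nat.dist
      omega
    rw [hdiag, diag_card, card_range]
    ring
  | succ k ih =>
    rw [card_filter_le_add_one, card_filter_dist_eq L (k + 1) k.succ_pos]
    have hprev := ih (by omega)
    obtain ⟨j, rfl⟩ := Nat.exists_eq_add_of_le hk
    rw [Nat.add_sub_cancel_left]
    nlinarith

theorem cast_card_filter_dist_le (L k : ℕ) (hk : k ≤ L) :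
    (#((range L ×ˢ range L).filter (fun p => Nat.dist p.1 p.2 ≤ k)) : ℚ)
      = (2 * k + 1) * L - k * (k + 1) := by
  rw [eq_sub_iff_add_eq]
  exact_mod_cast card_filter_dist_le_add L k hk

theorem uniformDist_comm (a b : ℕ × ℕ) : uniformDist a b = uniformDist b a := by
  simp only [uniformDist, Nat.dist_comm]

theorem card_filter_uniformDist_le (s t : Finset ℕ) (k : ℕ) :
    #(((s ×ˢ t) ×ˢ (s ×ˢ t)).filter (fun q => uniformDist q.1 q.2 ≤ k))
      = #((s ×ˢ s).filter (fun p => Nat.dist p.1 p.2 ≤ k))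
        * #((t ×ˢ t).filter (fun p => Nat.dist p.1 p.2 ≤ k)) := by
  rw [← card_product]
  refine card_nbij' (fun q => ((q.1.1, q.2.1), (q.1.2, q.2.2)))
    (fun q => ((q.1.1, q.2.1), (q.1.2, q.2.2))) ?_ ?_ (fun _ _ => rfl) (fun _ _ => rfl) <;>
  · intro q hq
    simp only [mem_coe, mem_filter, mem_product, uniformDist, max_le_iff] at hq ⊢
    tauto

theorem cast_card_pairs_uniformDist_eq {Lx Ly m : ℕ} (hm : 0 < m) (hx : m ≤ Lx)
    (hy : m ≤ Ly) :
    (#(((latticeSites Lx Ly).powersetCard 2).filter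
        (fun p => ∃ a ∈ p, ∃ b ∈ p, a ≠ b ∧ uniformDist a b = m)) : ℚ)
      = 4 * m * Lx * Ly - 3 * (Lx + Ly) * (m : ℚ) ^ 2 + 2 * (m : ℚ) ^ 3 := by
  obtain ⟨k, rfl⟩ : ∃ k, m = k + 1 := ⟨m - 1, by omega⟩
  have hordered := card_filter_product_eq_two_mul_card_pairs (latticeSites Lx Ly)
    (fun a b => uniformDist a b = k + 1) (fun a b h => uniformDist_comm a b ▸ h)
    (fun a h => by simp [uniformDist] at h)
  have hsplit := card_filter_le_add_one (latticeSites Lx Ly ×ˢ latticeSites Lx Ly)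
    (fun q => uniformDist q.1 q.2) k
  rw [hordered] at hsplit
  rw [latticeSites] at hsplit ⊢
  rw [card_filter_uniformDist_le, card_filter_uniformDist_le] at hsplit
  have hsplitQ := congrArg (Nat.cast : ℕ → ℚ) hsplit
  push_cast [cast_card_filter_dist_le Lx k (by omega), cast_card_filter_dist_le Ly k (by omega),
    cast_card_filter_dist_le Lx (k + 1) hx, cast_card_filter_dist_le Ly (k + 1) hy] at hsplitQ
  push_cast
  linear_combination -hsplitQ / 2

theorem expected_nonperiodic_uniform_pair_count_general (Lx Ly m N : ℕ)
    (hm : 0 < m) (hmle : m ≤ min Lx Ly - 1)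
    (hN : 2 ≤ N) (hNle : N ≤ Lx * Ly) :
    (∑ M ∈ (latticeSites Lx Ly).powersetCard N, (pairCount m M : ℚ))
        / ((Lx * Ly).choose N)
      = ((N : ℚ) / ((Lx : ℚ) * (Ly : ℚ))) * (((N : ℚ) - 1) / ((Lx : ℚ) * (Ly : ℚ) - 1)) *
        (4 * m * Lx * Ly - 3 * (Lx + Ly) * (m : ℚ) ^ 2 + 2 * (m : ℚ) ^ 3) := by
  have hcard : #(latticeSites Lx Ly) = Lx * Ly := by simp [latticeSites]
  have hsites : (2 : ℚ) ≤ Lx * Ly := by exact_mod_cast hN.trans hNle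
  have hsites_sub_one : (Lx : ℚ) * Ly - 1 ≠ 0 := by linarith
  rw [← hcard] at hNle ⊢
  simp only [pairCount]
  rw [sum_card_filter_powersetCard_div_choose _ _ hN hNle,
    cast_card_pairs_uniformDist_eq hm (by omega) (by omega), hcard, Nat.cast_choose_two,
    Nat.cast_choose_two]
  push_cast
  field_simp

/-- If `N` sites of the `Lx × Ly` lattice are occupied uniformly at random, the expected
number of unordered pairs of occupied sites at uniform (Chebyshev) distance exactly `m`
is `(N/(Lx Ly)) ((N−1)/(Lx Ly − 1)) (4 m Lx Ly − 3 (Lx + Ly) m² + 2 m³)`. -/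
theorem expected_nonperiodic_uniform_pair_count (Lx Ly m N : ℕ)
    (hLx : 0 < Lx) (hLy : 0 < Ly) (hm : 0 < m) (hmle : m ≤ min Lx Ly - 1)
    (hN : 2 ≤ N) (hNle : N ≤ Lx * Ly) :
    (∑ M ∈ (latticeSites Lx Ly).powersetCard N, (pairCount m M : ℚ))
        / ((Lx * Ly).choose N)
      = ((N : ℚ) / ((Lx : ℚ) * (Ly : ℚ))) * (((N : ℚ) - 1) / ((Lx : ℚ) * (Ly : ℚ) - 1)) *
        (4 * m * Lx * Ly - 3 * (Lx + Ly) * (m : ℚ) ^ 2 + 2 * (m : ℚ) ^ 3) :=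
  expected_nonperiodic_uniform_pair_count_general Lx Ly m N hm hmle hN hNle
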